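/- Let g and h be arithmetic functions with g(n) ≥ h(n) ≥ 0 for all positive integers n. Then for every real x ≥ 1 and every positive integer ℓ, 𝔼((Σ_{n ≤ x} 𝕏(n) g(n))^{2ℓ}) ≥ 𝔼((Σ_{n ≤ x} 𝕏(n) h(n))^{2ℓ}). -/

import Mathlib

open MeasureTheory ProbabilityTheory Finset

/-- The Sato–Tate measure `dμ_st(t) = (2/π) sin²(t) dt` on `[0, π]`. -/
noncomputable def satoTate : Measure ℝ :=
  (volume.restrict (Set.Icc 0 Real.pi)).withDensity
    fun t => ENNReal.ofReal (2 / Real.pi * Real.sin t ^ 2)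

/-- The random variable `𝕏(n) = ∏_{p^a ∥ n} U_a(cos θ_p)`, where `U_a` is the `a`-th
Chebyshev polynomial of the second kind (i.e. `tr Symᵃ`). In particular `𝕏(1) = 1`. -/
noncomputable def X {Ω : Type*} (θ : ℕ → Ω → ℝ) (n : ℕ) (ω : Ω) : ℝ :=
  ∏ p ∈ n.primeFactors,
    (Polynomial.Chebyshev.U ℝ ((n.factorization p : ℕ) : ℤ)).eval (Real.cos (θ p ω))

/-!
Expanding the `k`-th power, `𝔼((∑ 𝕏(n) c(n))^k)` is a combination of the mixed moments
`𝔼(𝕏(n₁) ⋯ 𝕏(n_k))` with coefficients `c(n₁) ⋯ c(n_k)`, which are monotone in `c ≥ 0`; so it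
suffices that every mixed moment is nonnegative. By independence a mixed moment factors over the
primes into Sato–Tate integrals of products `U_{a₁}(cos t) ⋯ U_{a_r}(cos t)`. The identity
`U_a U_{b+1} = U_{a+1} U_b + U_{a-b-1}` (for `b < a`) shows that such a product is an
`ℕ`-combination of the `U_c`, and `∫ U_c(cos t) dμ_st` is `1` for `c = 0` and `0` otherwise.
-/

open Polynomial.Chebyshev Real
open scoped Pointwise Polynomial

namespace Polynomial.Chebyshev

variable (R : Type*) [CommRing R]

theorem U_mul_U_sub_U_mul_U (m n : ℤ) :
    U R m * U R n - U R (m + 1) * U R (n - 1) = U R (m - n) := by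
  have shift : ∀ m n : ℤ, U R m * U R (n + 1) - U R (m + 1) * U R n =
      U R (m - 1) * U R n - U R (m - 1 + 1) * U R (n - 1) := fun m n => by
    rw [U_add_one R n, U_add_one R m, sub_add_cancel]; ring
  induction n using Int.induction_on generalizing m with
  | zero => simp [U_neg_one]
  | succ n ih => rw [add_sub_cancel_right, shift, ih]; ring_nf
  | pred n ih =>
    have h := shift (m + 1) (-n - 1)
    rw [sub_add_cancel, add_sub_cancel_right, ih] at h
    rw [← h]; ring_nf

theorem U_mul_U_mem_closure (a b : ℕ) :
    U R a * U R b ∈ AddSubmonoid.closure (Set.range fun c : ℕ => U R c) := by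
  wlog hba : b ≤ a generalizing a b
  · rw [mul_comm]; exact this b a (by omega)
  induction b generalizing a with
  | zero =>
    simpa using AddSubmonoid.subset_closure (Set.mem_range_self (f := fun c : ℕ => U R c) a)
  | succ b ih =>
    have hsplit := U_mul_U_sub_U_mul_U R a (b + 1)
    rw [add_sub_cancel_right, show (a : ℤ) - (b + 1) = (a - b - 1 : ℕ) by omega,
      sub_eq_iff_eq_add'] at hsplit
    push_cast
    rw [hsplit]
    exact add_mem (by exact_mod_cast ih (a + 1) (by omega)) (AddSubmonoid.subset_closure ⟨_, rfl⟩)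

/-- The `ℕ`-linear combinations of the `U_a`, `a ≥ 0`: a subsemiring by the Clebsch–Gordan rule. -/
noncomputable def USemiring : Subsemiring R[X] where
  toAddSubmonoid := AddSubmonoid.closure (Set.range fun a : ℕ => U R a)
  one_mem' := AddSubmonoid.subset_closure ⟨0, by simp⟩
  mul_mem' hP hQ := by
    refine (AddSubmonoid.closure_mul_closure _ _).trans_le (AddSubmonoid.closure_le.2 ?_)
      (AddSubmonoid.mul_mem_mul hP hQ)
    rintro _ ⟨_, ⟨a, rfl⟩, _, ⟨b, rfl⟩, rfl⟩
    exact U_mul_U_mem_closure R a b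

theorem U_mem_USemiring (a : ℕ) : U R a ∈ USemiring R :=
  AddSubmonoid.subset_closure ⟨a, rfl⟩

end Polynomial.Chebyshev

theorem Polynomial.exists_abs_eval_cos_le (P : ℝ[X]) : ∃ C, ∀ t, |P.eval (cos t)| ≤ C := by
  obtain ⟨C, hC⟩ := isCompact_Icc.exists_bound_of_continuousOn
    (P.continuous.continuousOn (s := Set.Icc (-1) 1))
  exact ⟨C, fun t => hC _ ⟨neg_one_le_cos t, cos_le_one t⟩⟩

theorem integral_cos_nat_mul (k : ℕ) : ∫ t in 0..π, cos (k * t) = if k = 0 then π else 0 := by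
  split_ifs with hk
  · simp [hk]
  · have hk' : (k : ℝ) ≠ 0 := by exact_mod_cast hk
    rw [intervalIntegral.integral_comp_mul_left (fun t => cos t) hk']
    simp [integral_cos, sin_nat_mul_pi]

instance : IsFiniteMeasure satoTate :=
  isFiniteMeasure_withDensity_ofReal (Continuous.integrableOn_Icc (by fun_prop)).hasFiniteIntegral

theorem integral_satoTate (f : ℝ → ℝ) :
    ∫ t, f t ∂satoTate = ∫ t in 0..π, 2 / π * sin t ^ 2 * f t := by
  rw [satoTate, integral_withDensity_eq_integral_toReal_smul (by fun_prop)
    (ae_of_all _ fun _ => ENNReal.ofReal_lt_top), intervalIntegral.integral_of_le pi_pos.le,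
    ← integral_Icc_eq_integral_Ioc]
  refine integral_congr_ae (ae_of_all _ fun t => ?_)
  dsimp only
  rw [smul_eq_mul, ENNReal.toReal_ofReal (by positivity)]

theorem integral_satoTate_eval_U_nonneg (a : ℕ) :
    0 ≤ ∫ t, (U ℝ a).eval (cos t) ∂satoTate := by
  have hdensity : ∀ t, 2 / π * sin t ^ 2 * (U ℝ a).eval (cos t) =
      (cos (a * t) - cos ((a + 2 : ℕ) * t)) / π := fun t => by
    rw [show 2 / π * sin t ^ 2 * (U ℝ a).eval (cos t) =
        2 / π * sin t * ((U ℝ a).eval (cos t) * sin t) by ring,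
      U_real_cos, cos_sub_cos]
    push_cast
    ring_nf
    rw [sin_neg]
    ring
  rw [integral_satoTate, intervalIntegral.integral_congr (fun t _ => hdensity t),
    intervalIntegral.integral_div, intervalIntegral.integral_sub, integral_cos_nat_mul,
    integral_cos_nat_mul, if_neg (Nat.succ_ne_zero _)]
  · split_ifs <;> simp
  all_goals exact (by fun_prop : Continuous _).intervalIntegrable _ _

theorem integrable_satoTate_eval_cos (P : ℝ[X]) :
    Integrable (fun t => P.eval (cos t)) satoTate := by
  obtain ⟨C, hC⟩ := P.exists_abs_eval_cos_le
  exact .of_bound (by fun_prop) C (ae_of_all _ hC)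

theorem integral_satoTate_eval_cos_nonneg {P : ℝ[X]} (hP : P ∈ USemiring ℝ) :
    0 ≤ ∫ t, P.eval (cos t) ∂satoTate := by
  induction hP using AddSubmonoid.closure_induction with
  | mem _ h => obtain ⟨a, rfl⟩ := h; exact integral_satoTate_eval_U_nonneg a
  | zero => simp
  | add P Q _ _ hP hQ =>
    simp only [Polynomial.eval_add]
    rw [integral_add (integrable_satoTate_eval_cos P) (integrable_satoTate_eval_cos Q)]
    exact add_nonneg hP hQ

theorem exists_abs_prod_le {ι Ω : Type*} {f : ι → Ω → ℝ} (s : Finset ι)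
    (hf : ∀ i ∈ s, ∃ C, ∀ ω, |f i ω| ≤ C) : ∃ C, ∀ ω, |∏ i ∈ s, f i ω| ≤ C := by
  choose C hC using hf
  refine ⟨∏ i ∈ s.attach, C i i.2, fun ω => ?_⟩
  rw [abs_prod, ← prod_attach]
  exact prod_le_prod (fun _ _ => abs_nonneg _) fun i _ => hC i i.2 ω

section Moments

variable {Ω ι : Type*} [MeasurableSpace Ω] {μ : Measure Ω}

theorem ProbabilityTheory.iIndepFun.integral_finset_prod_comp {β : Type*} [MeasurableSpace β]
    {Y : ι → Ω → β} (hY : iIndepFun Y μ) (mY : ∀ i, AEMeasurable (Y i) μ) {f : ι → β → ℝ}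
    (hf : ∀ i, AEStronglyMeasurable (f i) (μ.map (Y i))) (s : Finset ι) :
    ∫ ω, ∏ i ∈ s, f i (Y i ω) ∂μ = ∏ i ∈ s, ∫ ω, f i (Y i ω) ∂μ := by
  have h := (hY.precomp (g := ((↑) : s → ι)) Subtype.val_injective).integral_fun_prod_comp
    (fun i => mY i) (fun i => hf i)
  simp_rw [← prod_coe_sort s]
  exact h

variable [IsFiniteMeasure μ] {Y : ι → Ω → ℝ}

theorem integral_sum_mul_pow (hY : ∀ i, AEStronglyMeasurable (Y i) μ)
    (hbdd : ∀ i, ∃ C, ∀ ω, |Y i ω| ≤ C) (s : Finset ι) (c : ι → ℝ) (k : ℕ) :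
    ∫ ω, (∑ i ∈ s, Y i ω * c i) ^ k ∂μ =
      ∑ p ∈ Fintype.piFinset fun _ : Fin k => s, (∫ ω, ∏ j, Y (p j) ω ∂μ) * ∏ j, c (p j) := by
  have hintegrable : ∀ p : Fin k → ι, Integrable (fun ω => ∏ j, Y (p j) ω) μ := fun p => by
    obtain ⟨C, hC⟩ := exists_abs_prod_le univ fun j _ => hbdd (p j)
    exact .of_bound (Finset.aestronglyMeasurable_fun_prod _ fun j _ => hY (p j)) C (ae_of_all _ hC)
  simp_rw [sum_pow', prod_mul_distrib]
  rw [integral_finsetSum _ fun p _ => (hintegrable p).mul_const _]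
  simp_rw [integral_mul_const]

theorem integral_sum_mul_pow_le (hY : ∀ i, AEStronglyMeasurable (Y i) μ)
    (hbdd : ∀ i, ∃ C, ∀ ω, |Y i ω| ≤ C) {k : ℕ}
    (hmoment : ∀ p : Fin k → ι, 0 ≤ ∫ ω, ∏ j, Y (p j) ω ∂μ) {s : Finset ι} {g h : ι → ℝ}
    (hh : ∀ i ∈ s, 0 ≤ h i) (hgh : ∀ i ∈ s, h i ≤ g i) :
    ∫ ω, (∑ i ∈ s, Y i ω * h i) ^ k ∂μ ≤ ∫ ω, (∑ i ∈ s, Y i ω * g i) ^ k ∂μ := by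
  rw [integral_sum_mul_pow hY hbdd, integral_sum_mul_pow hY hbdd]
  refine sum_le_sum fun p hp => mul_le_mul_of_nonneg_left ?_ (hmoment p)
  rw [Fintype.mem_piFinset] at hp
  exact prod_le_prod (fun j _ => hh _ (hp j)) fun j _ => hgh _ (hp j)

end Moments

section SatoTateFamily

variable {Ω : Type*} {θ : ℕ → Ω → ℝ}

theorem X_eq_prod_of_subset {n : ℕ} {S : Finset ℕ} (hS : n.primeFactors ⊆ S) (ω : Ω) :
    X θ n ω = ∏ p ∈ S, (U ℝ (n.factorization p : ℕ)).eval (cos (θ p ω)) :=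
  prod_subset hS fun p _ hp => by
    simp [Finsupp.notMem_support_iff.1 (n.support_factorization ▸ hp)]

theorem prod_X_eq_prod_eval {κ : Type*} [Fintype κ] (n : κ → ℕ) (ω : Ω) :
    ∏ i, X θ (n i) ω = ∏ p ∈ univ.biUnion (fun i => (n i).primeFactors),
      (∏ i, U ℝ ((n i).factorization p : ℕ)).eval (cos (θ p ω)) := by
  simp_rw [Polynomial.eval_prod]
  rw [prod_comm]
  exact prod_congr rfl fun i _ =>
    X_eq_prod_of_subset (subset_biUnion_of_mem (fun i => (n i).primeFactors) (mem_univ i)) ω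

theorem measurable_X [MeasurableSpace Ω] (hmeas : ∀ p : ℕ, p.Prime → Measurable (θ p)) (n : ℕ) :
    Measurable (X θ n) :=
  Finset.measurable_prod _ fun p hp =>
    (by fun_prop : Continuous fun t => (U ℝ (n.factorization p : ℕ)).eval (cos t)).measurable.comp
      (hmeas p (Nat.prime_of_mem_primeFactors hp))

theorem exists_abs_X_le (n : ℕ) : ∃ C, ∀ ω, |X θ n ω| ≤ C :=
  exists_abs_prod_le _ fun p _ =>
    (U ℝ (n.factorization p : ℕ)).exists_abs_eval_cos_le.imp fun _ hC ω => hC (θ p ω)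

theorem integral_prod_X_nonneg [MeasurableSpace Ω] {μ : Measure Ω}
    (hmeas : ∀ p : ℕ, p.Prime → Measurable (θ p))
    (hdist : ∀ p : ℕ, p.Prime → Measure.map (θ p) μ = satoTate)
    (hindep : iIndepFun (fun p : {p : ℕ // p.Prime} => θ p.1) μ)
    {κ : Type*} [Fintype κ] (n : κ → ℕ) :
    0 ≤ ∫ ω, ∏ i, X θ (n i) ω ∂μ := by
  set S := univ.biUnion fun i => (n i).primeFactors
  set Q : ℕ → ℝ[X] := fun p => ∏ i, U ℝ ((n i).factorization p : ℕ)
  have hS : ∀ p ∈ S, p.Prime := fun p hp => by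
    obtain ⟨i, -, hi⟩ := mem_biUnion.1 hp
    exact Nat.prime_of_mem_primeFactors hi
  have hQ (p : ℕ) : Continuous fun t => (Q p).eval (cos t) := by fun_prop
  have hfactor (ω : Ω) : ∏ i, X θ (n i) ω =
      ∏ q ∈ S.subtype Nat.Prime, (Q q).eval (cos (θ q ω)) :=
    (prod_X_eq_prod_eval n ω).trans (prod_subtype_of_mem _ hS).symm
  simp_rw [hfactor]
  rw [hindep.integral_finset_prod_comp (f := fun q t => (Q q).eval (cos t))
    (fun q => (hmeas q q.2).aemeasurable) (fun q => (hQ q).aestronglyMeasurable)]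
  refine prod_nonneg fun q _ => ?_
  rw [← integral_map (hmeas q q.2).aemeasurable (hQ q).aestronglyMeasurable, hdist q q.2]
  exact integral_satoTate_eval_cos_nonneg (prod_mem fun i _ => U_mem_USemiring ℝ _)

end SatoTateFamily

theorem stmt_6_general {Ω : Type*} [MeasurableSpace Ω] (μ : Measure Ω) [IsProbabilityMeasure μ]
    (θ : ℕ → Ω → ℝ)
    (hmeas : ∀ p : ℕ, p.Prime → Measurable (θ p))
    (hdist : ∀ p : ℕ, p.Prime → Measure.map (θ p) μ = satoTate)
    (hindep : iIndepFun
      (fun p : {p : ℕ // p.Prime} => θ p.1) μ)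
    (g h : ℕ → ℝ) (hgh : ∀ n : ℕ, 1 ≤ n → h n ≤ g n) (hh : ∀ n : ℕ, 1 ≤ n → 0 ≤ h n)
    (x : ℝ) (ℓ : ℕ) :
    ∫ ω, (∑ n ∈ Finset.Icc 1 ⌊x⌋₊, X θ n ω * h n) ^ (2 * ℓ) ∂μ ≤
      ∫ ω, (∑ n ∈ Finset.Icc 1 ⌊x⌋₊, X θ n ω * g n) ^ (2 * ℓ) ∂μ :=
  integral_sum_mul_pow_le (fun n => (measurable_X hmeas n).aestronglyMeasurable) exists_abs_X_le
    (integral_prod_X_nonneg hmeas hdist hindep) (fun n hn => hh n (mem_Icc.1 hn).1)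
    (fun n hn => hgh n (mem_Icc.1 hn).1)

theorem stmt_6 {Ω : Type*} [MeasurableSpace Ω] (μ : Measure Ω) [IsProbabilityMeasure μ]
    (θ : ℕ → Ω → ℝ)
    (hmeas : ∀ p : ℕ, p.Prime → Measurable (θ p))
    (hrange : ∀ p : ℕ, p.Prime → ∀ ω : Ω, θ p ω ∈ Set.Icc 0 Real.pi)
    (hdist : ∀ p : ℕ, p.Prime → Measure.map (θ p) μ = satoTate)
    (hindep : iIndepFun
      (fun p : {p : ℕ // p.Prime} => θ p.1) μ)
    (g h : ℕ → ℝ) (hgh : ∀ n : ℕ, 1 ≤ n → h n ≤ g n) (hh : ∀ n : ℕ, 1 ≤ n → 0 ≤ h n)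
    (x : ℝ) (hx : 1 ≤ x) (ℓ : ℕ) (hℓ : 1 ≤ ℓ) :
    ∫ ω, (∑ n ∈ Finset.Icc 1 ⌊x⌋₊, X θ n ω * h n) ^ (2 * ℓ) ∂μ ≤
      ∫ ω, (∑ n ∈ Finset.Icc 1 ⌊x⌋₊, X θ n ω * g n) ^ (2 * ℓ) ∂μ :=
  stmt_6_general μ θ hmeas hdist hindep g h hgh hh x ℓ
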